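/- If F = (X; f₁,…,f_N) is a point-fibred IFS on a compact Hausdorff space X with attractor A and coding map π, then A equals the range of the coding map, A = π(I^∞); moreover, for every σ ∈ I^∞ and every point a ∈ X, π(σ) = lim_{k→∞} f_{σ|k}(a), where f_{σ|k} := f_{σ₁} ∘ f_{σ₂} ∘ ⋯ ∘ f_{σ_k}. -/

import Mathlib

open Set Topology Filter

/-- `seqComp f σ k` is the composition `f_{σ|k} = f_{σ₁} ∘ f_{σ₂} ∘ ⋯ ∘ f_{σ_k}`
(with the sequence `σ` indexed from `0`). -/
def seqComp {X : Type*} {N : ℕ} (f : Fin N → X → X) (σ : ℕ → Fin N) : ℕ → X → X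
  | 0 => id
  | k + 1 => seqComp f σ k ∘ f (σ k)

/-- `PiMap f σ = ⋂_{k ≥ 1} f_{σ₁} ∘ ⋯ ∘ f_{σ_k}(X)`. -/
def PiMap {X : Type*} {N : ℕ} (f : Fin N → X → X) (σ : ℕ → Fin N) : Set X :=
  ⋂ k : ℕ, seqComp f σ (k + 1) '' Set.univ

/-- The Vietoris topology (on all subsets of `X`; the Vietoris topology on the
nonempty compact subsets `K(X)` is the subspace topology it induces): it is generated
by the sets `{B | B ⊆ U}` and `{B | B ∩ U ≠ ∅}` for `U ⊆ X` open. -/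
def vietoris (X : Type*) [TopologicalSpace X] : TopologicalSpace (Set X) :=
  TopologicalSpace.generateFrom
    ({S | ∃ U : Set X, IsOpen U ∧ S = {B : Set X | B ⊆ U}} ∪
     {S | ∃ U : Set X, IsOpen U ∧ S = {B : Set X | (B ∩ U).Nonempty}})

/-! The cylinder sets `f_{σ|k}(X)` are nested and compact with intersection `{π σ}`, so in a
compact Hausdorff space every sequence picked from them, in particular `f_{σ|k}(a)`, tends to
`π σ`. Taking `a ∈ A` puts `π σ` in the closed invariant set `A`; conversely, since
`A ⊆ F(A)`, every point of `A` can be traced backwards through `A` along some address `σ`,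
which puts it in every cylinder of `σ`. -/

lemma tendsto_nhds_of_antitone_isCompact {X : Type*} [TopologicalSpace X] [T2Space X]
    {K : ℕ → Set X} (hK : Antitone K) (hKc : ∀ k, IsCompact (K k)) {p : X}
    (hp : ⋂ k, K k = {p}) {x : ℕ → X} (hx : ∀ k, x k ∈ K k) :
    Tendsto x atTop (𝓝 p) := by
  refine tendsto_iff_forall_eventually_mem.2 fun U hU => ?_
  obtain ⟨n, hn⟩ := exists_subset_nhds_of_isCompact hK.directed_ge hKc
    (by rw [hp]; rintro _ rfl; exact hU)
  exact eventually_atTop.2 ⟨n, fun k hk => hn (hK hk (hx k))⟩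

section seqComp

variable {X : Type*} {N : ℕ} (f : Fin N → X → X) (σ : ℕ → Fin N)

lemma continuous_seqComp [TopologicalSpace X] (hf : ∀ i, Continuous (f i)) :
    ∀ k, Continuous (seqComp f σ k)
  | 0 => continuous_id
  | k + 1 => (continuous_seqComp hf k).comp (hf (σ k))

lemma mapsTo_seqComp {s : Set X} (hs : ∀ i, MapsTo (f i) s s) : ∀ k, MapsTo (seqComp f σ k) s s
  | 0 => mapsTo_id s
  | k + 1 => (mapsTo_seqComp hs k).comp (hs (σ k))

lemma antitone_range_seqComp : Antitone fun k => range (seqComp f σ k) :=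
  antitone_nat_of_succ_le fun _ => range_comp_subset_range _ _

lemma PiMap_eq_iInter_range : PiMap f σ = ⋂ k, range (seqComp f σ (k + 1)) := by
  simp only [PiMap, image_univ]

lemma tendsto_seqComp_of_PiMap_eq_singleton [TopologicalSpace X] [CompactSpace X] [T2Space X]
    (hf : ∀ i, Continuous (f i)) {p : X} (hp : PiMap f σ = {p}) (a : X) :
    Tendsto (fun k => seqComp f σ k a) atTop (𝓝 p) := by
  refine (tendsto_add_atTop_iff_nat 1).1 <| tendsto_nhds_of_antitone_isCompact
    (fun _ _ hkl => antitone_range_seqComp f σ (Nat.succ_le_succ hkl))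
    (fun k => isCompact_range (continuous_seqComp f σ hf (k + 1))) ?_ fun k => mem_range_self a
  rwa [← PiMap_eq_iInter_range]

end seqComp

lemma exists_forall_mem_image_seqComp {X : Type*} {N : ℕ} (f : Fin N → X → X) {s : Set X}
    (hs : s ⊆ ⋃ i, f i '' s) {a : X} (ha : a ∈ s) :
    ∃ σ : ℕ → Fin N, ∀ k, a ∈ seqComp f σ k '' s := by
  have hpre : ∀ x : s, ∃ (i : Fin N) (y : s), f i y = x := fun x => by
    obtain ⟨i, y, hy, hfy⟩ := mem_iUnion.1 (hs x.2)
    exact ⟨i, ⟨y, hy⟩, hfy⟩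
  choose i pre hpre using hpre
  let x : ℕ → s := fun k => pre^[k] ⟨a, ha⟩
  refine ⟨fun k => i (x k), fun k => ⟨x k, (x k).2, ?_⟩⟩
  induction k with
  | zero => rfl
  | succ k ih =>
    change seqComp f _ k (f (i (x k)) (pre^[k + 1] ⟨a, ha⟩)) = a
    rw [Function.iterate_succ_apply', hpre]
    exact ih

theorem attractor_eq_range_codingMap_general
    {X : Type*} [TopologicalSpace X] [CompactSpace X] [T2Space X]
    {N : ℕ} (f : Fin N → X → X) (hf : ∀ i, Continuous (f i))
    (π : (ℕ → Fin N) → X) (hπ : ∀ σ, PiMap f σ = {π σ})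
    -- `A` is an attractor of `F`:
    (A : Set X) (hA₁ : A.Nonempty) (hA₂ : IsCompact A) (hA₃ : (⋃ i, f i '' A) = A) :
    A = Set.range π ∧
      ∀ (σ : ℕ → Fin N) (a : X),
        Filter.Tendsto (fun k => seqComp f σ k a) Filter.atTop (nhds (π σ)) := by
  have hconv : ∀ σ a, Tendsto (fun k => seqComp f σ k a) atTop (𝓝 (π σ)) :=
    fun σ => tendsto_seqComp_of_PiMap_eq_singleton f σ hf (hπ σ)
  have hAinv : ∀ i, MapsTo (f i) A A := fun i x hx =>
    hA₃ ▸ mem_iUnion.2 ⟨i, mem_image_of_mem _ hx⟩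
  refine ⟨subset_antisymm (fun a ha => ?_) ?_, hconv⟩
  · obtain ⟨σ, hσ⟩ := exists_forall_mem_image_seqComp f hA₃.superset ha
    have haPi : a ∈ PiMap f σ :=
      mem_iInter.2 fun k => image_mono (subset_univ A) (hσ (k + 1))
    rw [hπ σ] at haPi
    exact ⟨σ, haPi.symm⟩
  · rintro _ ⟨σ, rfl⟩
    obtain ⟨a, ha⟩ := hA₁
    exact hA₂.isClosed.mem_of_tendsto (hconv σ a)
      (Eventually.of_forall fun k => mapsTo_seqComp f σ hAinv k ha)

/-- If `F` is a point-fibred IFS on a compact Hausdorff space `X` with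
attractor `A` and coding map `π`, then `A = π(I^∞)`, and moreover
`π(σ) = lim_k f_{σ|k}(a)` for every `σ ∈ I^∞` and every `a ∈ X`. -/
theorem attractor_eq_range_codingMap
    {X : Type*} [TopologicalSpace X] [CompactSpace X] [T2Space X] [Nonempty X]
    {N : ℕ} (hN : 0 < N) (f : Fin N → X → X) (hf : ∀ i, Continuous (f i))
    (π : (ℕ → Fin N) → X) (hπ : ∀ σ, PiMap f σ = {π σ})
    -- `A` is an attractor of `F`:
    (A : Set X) (hA₁ : A.Nonempty) (hA₂ : IsCompact A) (hA₃ : (⋃ i, f i '' A) = A)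
    (hA₄ : ∃ U : Set X, IsOpen U ∧ A ⊆ U ∧
      ∀ B : Set X, B.Nonempty → IsCompact B → B ⊆ U →
        Filter.Tendsto (fun k => (fun C : Set X => ⋃ i, f i '' C)^[k] B)
          Filter.atTop (@nhds (Set X) (vietoris X) A)) :
    A = Set.range π ∧
      ∀ (σ : ℕ → Fin N) (a : X),
        Filter.Tendsto (fun k => seqComp f σ k a) Filter.atTop (nhds (π σ)) :=
  attractor_eq_range_codingMap_general f hf π hπ A hA₁ hA₂ hA₃
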